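/- The Banzhaf GCM does not satisfy Set Inclusion: there exist a makespan function v satisfying (S1)–(S4), a finite set T, and sets T1 ⊆ T2 of transactions disjoint from T such that gas^B_{T∪T1}(T1) > gas^B_{T∪T2}(T2). In particular, for T = ∅, T1 = {tx1, tx2}, T2 = {tx1, tx2, tx3} with tx1 ≃ (1,{k1}), tx2 ≃ (1,{k1}), tx3 ≃ (1,{k2}) and v the optimal-scheduler makespan on at least 2 threads, gas^B_{T1}(T1) = 2 > 7/4 = gas^B_{T2}(T2). -/

import Mathlib

/-!
Take for `v` the largest total execution time of the transactions touching a single storage key.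
Transactions sharing a key must run one after the other, so this bounds every makespan from
below, and (S1)–(S4) hold for it key by key; on `tx1, tx2, tx3` it is the optimal makespan on two
threads. Summing the Banzhaf values over `T` gives `2^{1-n} Σ_{S ⊆ T} (2|S| - n) v(S)`, which is
`2` for `T1` and `7/4` for `T2`: adding `tx3` lowers the gas of `tx1` and `tx2` from `1` to `3/4`
each (next to `tx3` alone, `tx1` costs nothing), while `tx3` itself is charged only `1/4`.
-/

/-- The Banzhaf GCM: `gas^B_T(tx) = (1/2^{n−1}) Σ_{S ⊆ T\{tx}} [v(S∪{tx}) − v(S)]`. -/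
noncomputable def banzhafGas {Tx : Type} [DecidableEq Tx]
    (v : Finset Tx → ℝ) (T : Finset Tx) (tx : Tx) : ℝ :=
  (1 / 2 ^ (T.card - 1)) * ∑ S ∈ (T.erase tx).powerset, (v (insert tx S) - v S)

/-- Execution times of `tx1 ≃ (1,{k1})`, `tx2 ≃ (1,{k1})`, `tx3 ≃ (1,{k2})`
(indices `0,1,2`). -/
noncomputable def tTx14 : Fin 3 → ℝ := ![1, 1, 1]

/-- Storage key sets (keys `k1 = 0`, `k2 = 1`). -/
def keysTx14 : Fin 3 → Finset (Fin 2) := ![{0}, {0}, {1}]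

open Finset

lemma Finset.powerset_singleton {α : Type*} [DecidableEq α] (a : α) :
    ({a} : Finset α).powerset = {∅, {a}} := by
  ext S
  simp [subset_singleton_iff]

lemma ciSup_fin_two {α : Type*} [ConditionallyCompleteLinearOrder α] (f : Fin 2 → α) :
    ⨆ k, f k = max (f 0) (f 1) :=
  le_antisymm (ciSup_le (Fin.forall_fin_two.2 ⟨le_max_left _ _, le_max_right _ _⟩))
    (max_le (le_ciSup (Finite.bddAbove_range f) 0) (le_ciSup (Finite.bddAbove_range f) 1))

section KeyLoad

variable {ι κ : Type*} [DecidableEq κ] (t : ι → ℝ) (K : ι → Finset κ)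

def keyLoad (S : Finset ι) (k : κ) : ℝ :=
  ∑ i ∈ S with k ∈ K i, t i

noncomputable def maxKeyLoad (S : Finset ι) : ℝ :=
  ⨆ k, keyLoad t K S k

lemma maxKeyLoad_empty : maxKeyLoad t K ∅ = 0 := by
  simp [maxKeyLoad, keyLoad]

variable {t K} [Finite κ]

lemma maxKeyLoad_le_of_keyLoad_le {S S' : Finset ι} (h : ∀ k, keyLoad t K S k ≤ keyLoad t K S' k) :
    maxKeyLoad t K S ≤ maxKeyLoad t K S' :=
  ciSup_mono (Finite.bddAbove_range _) h

lemma maxKeyLoad_mono (ht : ∀ i, 0 ≤ t i) {A B : Finset ι} (h : A ⊆ B) :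
    maxKeyLoad t K A ≤ maxKeyLoad t K B :=
  maxKeyLoad_le_of_keyLoad_le fun _ ↦
    sum_le_sum_of_subset_of_nonneg (filter_subset_filter _ h) fun i _ _ ↦ ht i

variable [DecidableEq ι]

omit [Finite κ] in
lemma keyLoad_insert {a : ι} {S : Finset ι} (ha : a ∉ S) (k : κ) :
    keyLoad t K (insert a S) k = (if k ∈ K a then t a else 0) + keyLoad t K S k := by
  simp only [keyLoad, sum_filter, sum_insert ha]

lemma maxKeyLoad_bundle_le (ht : ∀ i, 0 ≤ t i) {S : Finset ι} {a b c : ι} (ha : a ∉ S)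
    (hb : b ∉ S) (hc : c ∉ S) (hab : a ≠ b) (htc : t c = t a + t b) (hKc : K c = K a ∪ K b) :
    maxKeyLoad t K (insert a (insert b S)) ≤ maxKeyLoad t K (insert c S) := by
  refine maxKeyLoad_le_of_keyLoad_le fun k ↦ ?_
  rw [keyLoad_insert (by simp [hab, ha]), keyLoad_insert hb, keyLoad_insert hc, htc, hKc]
  have := ht a
  have := ht b
  by_cases hka : k ∈ K a <;> by_cases hkb : k ∈ K b <;> simp [hka, hkb] <;> linarith

lemma maxKeyLoad_replace_le (ht : ∀ i, 0 ≤ t i) {S : Finset ι} {a b : ι} (ha : a ∉ S)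
    (hb : b ∉ S) (htab : t a ≤ t b) (hK : K a ⊆ K b) :
    maxKeyLoad t K (insert a S) ≤ maxKeyLoad t K (insert b S) := by
  refine maxKeyLoad_le_of_keyLoad_le fun k ↦ ?_
  rw [keyLoad_insert ha, keyLoad_insert hb]
  by_cases hka : k ∈ K a
  · simp [hka, hK hka, htab]
  · by_cases hkb : k ∈ K b <;> simp [hka, hkb, ht b]

end KeyLoad

section Banzhaf

variable {α : Type} [DecidableEq α]

lemma sum_sum_powerset_erase (T : Finset α) (f : Finset α → ℝ) :
    ∑ x ∈ T, ∑ S ∈ (T.erase x).powerset, f S = ∑ S ∈ T.powerset, (#T - #S : ℝ) * f S := by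
  rw [sum_comm' (t' := T.powerset) (s' := fun S ↦ T \ S)]
  · refine sum_congr rfl fun S hS ↦ ?_
    rw [mem_powerset] at hS
    rw [sum_const, card_sdiff_of_subset hS, nsmul_eq_mul, Nat.cast_sub (card_le_card hS)]
  · intro x S
    simp only [mem_powerset, mem_sdiff, subset_erase]
    tauto

lemma sum_powerset_erase_marginal (v : Finset α → ℝ) {T : Finset α} {x : α} (hx : x ∈ T) :
    ∑ S ∈ (T.erase x).powerset, (v (insert x S) - v S) =
      ∑ S ∈ T.powerset, v S - 2 * ∑ S ∈ (T.erase x).powerset, v S := by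
  rw [← insert_erase hx, sum_powerset_insert (notMem_erase x T), erase_insert_eq_erase,
    erase_idem, sum_sub_distrib]
  ring

lemma sum_banzhafGas (v : Finset α → ℝ) (T : Finset α) :
    ∑ x ∈ T, banzhafGas v T x =
      1 / 2 ^ (#T - 1) * ∑ S ∈ T.powerset, (2 * #S - #T : ℝ) * v S := by
  simp only [banzhafGas, ← mul_sum]
  rw [sum_congr rfl fun x hx ↦ sum_powerset_erase_marginal v hx, sum_sub_distrib, ← mul_sum,
    sum_sum_powerset_erase, sum_const, nsmul_eq_mul, mul_sum, mul_sum, ← sum_sub_distrib]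
  congr 1
  exact sum_congr rfl fun S _ ↦ by ring

end Banzhaf

lemma tTx14_nonneg (i : Fin 3) : 0 ≤ tTx14 i := by
  fin_cases i <;> simp [tTx14]

lemma sum_banzhafGas_maxKeyLoad_pair :
    ∑ tx ∈ ({0, 1} : Finset (Fin 3)), banzhafGas (maxKeyLoad tTx14 keysTx14) {0, 1} tx = 2 := by
  rw [sum_banzhafGas]
  simp only [maxKeyLoad, ciSup_fin_two, keyLoad, sum_filter]
  simp [sum_powerset_insert, powerset_singleton, tTx14, keysTx14]
  norm_num

lemma sum_banzhafGas_maxKeyLoad_triple :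
    ∑ tx ∈ ({0, 1, 2} : Finset (Fin 3)), banzhafGas (maxKeyLoad tTx14 keysTx14) {0, 1, 2} tx =
      7 / 4 := by
  rw [sum_banzhafGas]
  simp only [maxKeyLoad, ciSup_fin_two, keyLoad, sum_filter]
  simp [sum_powerset_insert, powerset_singleton, tTx14, keysTx14]
  norm_num

/-- The Banzhaf GCM does not satisfy Set Inclusion: there are a
makespan function `v` satisfying (S1)–(S4) (the optimal-scheduler makespan on
at least 2 threads), the set `T = ∅`, and sets `T1 = {tx1,tx2} ⊆ T2 =
{tx1,tx2,tx3}` disjoint from `T` with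
`gas^B_{T1}(T1) = 2 > 7/4 = gas^B_{T2}(T2)`. -/
theorem banzhafGas_not_set_inclusion :
    ∃ v : Finset (Fin 3) → ℝ,
      -- (S1) monotonicity in T
      (∀ A B : Finset (Fin 3), A ⊆ B → v A ≤ v B) ∧
      -- (S2) monotonicity under bundling
      (∀ (T : Finset (Fin 3)) (a b c : Fin 3), a ∉ T → b ∉ T → c ∉ T → a ≠ b →
        tTx14 c = tTx14 a + tTx14 b → keysTx14 c = keysTx14 a ∪ keysTx14 b →
        v (insert a (insert b T)) ≤ v (insert c T)) ∧
      -- (S3) monotonicity in t and K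
      (∀ (T : Finset (Fin 3)) (a b : Fin 3), a ∉ T → b ∉ T →
        tTx14 a ≤ tTx14 b → keysTx14 a ⊆ keysTx14 b →
        v (insert a T) ≤ v (insert b T)) ∧
      -- (S4) empty set
      v ∅ = 0 ∧
      -- T1 ⊆ T2
      ({0, 1} : Finset (Fin 3)) ⊆ ({0, 1, 2} : Finset (Fin 3)) ∧
      -- the total gas values
      (∑ tx ∈ ({0, 1} : Finset (Fin 3)),
          banzhafGas v ({0, 1} : Finset (Fin 3)) tx) = 2 ∧
      (∑ tx ∈ ({0, 1, 2} : Finset (Fin 3)),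
          banzhafGas v ({0, 1, 2} : Finset (Fin 3)) tx) = 7 / 4 ∧
      (∑ tx ∈ ({0, 1} : Finset (Fin 3)),
          banzhafGas v ({0, 1} : Finset (Fin 3)) tx)
        > (∑ tx ∈ ({0, 1, 2} : Finset (Fin 3)),
            banzhafGas v ({0, 1, 2} : Finset (Fin 3)) tx) := by
  refine ⟨maxKeyLoad tTx14 keysTx14,
    fun _ _ ↦ maxKeyLoad_mono tTx14_nonneg,
    fun _ _ _ _ ha hb hc hab htc hKc ↦ maxKeyLoad_bundle_le tTx14_nonneg ha hb hc hab htc hKc,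
    fun _ _ _ ha hb htab hK ↦ maxKeyLoad_replace_le tTx14_nonneg ha hb htab hK,
    maxKeyLoad_empty _ _, by decide, sum_banzhafGas_maxKeyLoad_pair,
    sum_banzhafGas_maxKeyLoad_triple, ?_⟩
  rw [sum_banzhafGas_maxKeyLoad_pair, sum_banzhafGas_maxKeyLoad_triple]
  norm_num
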